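/- arXiv:2409.18681 — 2 statements merged into one kernel-verified Lean document; each statement's English description precedes it below -/
import Mathlib

section
/- Let N, M be positive integers, let μ, ν : Fin N → ℂ, let a, b : Fin N → ℂ with |a_i| = 1 and |b_i| = 1 for all i, and suppose there is a permutation σ of Fin N with ν_i = μ_{σ(i)} for all i. Define the N×M complex matrices Φ_f and Φ_g by (Φ_f)_{i,n} = a_i μ_i^{n+1} and (Φ_g)_{i,n} = b_i ν_i^{n+1} (for n = 0,…,M−1), and let Λ_f = diag(μ), Λ_g = diag(ν). Then there exists a unitary N×N complex matrix C such that Φ_g = C Φ_f and C* Λ_g C = Λ_f. -/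
/-!
The witness is the monomial matrix `C = diag(c) P_σ` with `c i = b i * conj (a (σ i))`: the
permutation matrix `P_σ` moves row `σ i` of `Φf` to row `i`, matching the eigenvalue order of `g`,
and the unit-modulus diagonal replaces the phase `a (σ i)` by `b i`. Diagonal matrices commute, so
`Λg C = C Λf`, and unitarity of `C` turns this intertwining into `Cᴴ Λg C = Λf`.
-/

open Matrix

section MonomialMatrix

variable {n α : Type*} [Fintype n] [DecidableEq n] [CommRing α] [StarRing α]

theorem Matrix.permMatrix_mem_unitaryGroup (σ : Equiv.Perm n) :
    σ.permMatrix α ∈ unitaryGroup n α := by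
  rw [mem_unitaryGroup_iff', star_eq_conjTranspose, conjTranspose_permMatrix, ← permMatrix_mul,
    mul_inv_cancel, permMatrix_one]

theorem Matrix.diagonal_mem_unitaryGroup {c : n → α} (hc : ∀ i, star (c i) * c i = 1) :
    diagonal c ∈ unitaryGroup n α := by
  rw [mem_unitaryGroup_iff', star_eq_conjTranspose, diagonal_conjTranspose, diagonal_mul_diagonal,
    ← diagonal_one]
  exact congrArg diagonal (funext hc)

omit [StarRing α] in
theorem Matrix.diagonal_comp_mul_permMatrix (μ : n → α) (σ : Equiv.Perm n) :
    diagonal (μ ∘ σ) * σ.permMatrix α = σ.permMatrix α * diagonal μ := by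
  ext i j
  by_cases h : σ i = j <;> simp [h]

theorem Matrix.conjTranspose_mul_mul_eq_of_mul_eq {C A B : Matrix n n α}
    (hC : C ∈ unitaryGroup n α) (h : A * C = C * B) : Cᴴ * A * C = B := by
  rw [mul_assoc, h, ← mul_assoc, ← star_eq_conjTranspose, Unitary.star_mul_self_of_mem hC, one_mul]

end MonomialMatrix

theorem stmt_3_general (N M : ℕ)
    (μ ν : Fin N → ℂ) (a b : Fin N → ℂ)
    (ha : ∀ i, ‖a i‖ = 1) (hb : ∀ i, ‖b i‖ = 1)
    (σ : Equiv.Perm (Fin N)) (hσ : ∀ i, ν i = μ (σ i))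
    (Φf Φg : Matrix (Fin N) (Fin M) ℂ)
    (hΦf : ∀ i n, Φf i n = a i * μ i ^ ((n : ℕ) + 1))
    (hΦg : ∀ i n, Φg i n = b i * ν i ^ ((n : ℕ) + 1))
    (Λf Λg : Matrix (Fin N) (Fin N) ℂ)
    (hΛf : Λf = Matrix.diagonal μ) (hΛg : Λg = Matrix.diagonal ν) :
    ∃ C ∈ Matrix.unitaryGroup (Fin N) ℂ,
      Φg = C * Φf ∧ Cᴴ * Λg * C = Λf := by
  have star_mul_self {z : ℂ} (hz : ‖z‖ = 1) : star z * z = 1 := by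
    rw [RCLike.star_def, Complex.conj_mul', hz, Complex.ofReal_one, one_pow]
  set c : Fin N → ℂ := fun i => b i * star (a (σ i))
  have hc : ∀ i, star (c i) * c i = 1 := fun i => star_mul_self <| by
    rw [norm_mul, norm_star, ha, hb, one_mul]
  have hν : ν = μ ∘ σ := funext hσ
  have hC : diagonal c * σ.permMatrix ℂ ∈ unitaryGroup (Fin N) ℂ :=
    Submonoid.mul_mem _ (diagonal_mem_unitaryGroup hc) (permMatrix_mem_unitaryGroup σ)
  refine ⟨_, hC, ?_, ?_⟩
  · ext i n
    rw [Matrix.mul_assoc, PEquiv.toMatrix_toPEquiv_mul, diagonal_mul, submatrix_apply, hΦg, hΦf,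
      hσ, mul_assoc, ← mul_assoc (star _), star_mul_self (ha _), one_mul, id]
  · refine conjTranspose_mul_mul_eq_of_mul_eq hC ?_
    rw [hΛg, hΛf, ← mul_assoc, (commute_diagonal ν c).eq, mul_assoc, hν,
      diagonal_comp_mul_permMatrix, mul_assoc]

theorem stmt_3 (N M : ℕ) (hN : 0 < N) (hM : 0 < M)
    (μ ν : Fin N → ℂ) (a b : Fin N → ℂ)
    (ha : ∀ i, ‖a i‖ = 1) (hb : ∀ i, ‖b i‖ = 1)
    (σ : Equiv.Perm (Fin N)) (hσ : ∀ i, ν i = μ (σ i))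
    (Φf Φg : Matrix (Fin N) (Fin M) ℂ)
    (hΦf : ∀ i n, Φf i n = a i * μ i ^ ((n : ℕ) + 1))
    (hΦg : ∀ i n, Φg i n = b i * ν i ^ ((n : ℕ) + 1))
    (Λf Λg : Matrix (Fin N) (Fin N) ℂ)
    (hΛf : Λf = Matrix.diagonal μ) (hΛg : Λg = Matrix.diagonal ν) :
    ∃ C ∈ Matrix.unitaryGroup (Fin N) ℂ,
      Φg = C * Φf ∧ Cᴴ * Λg * C = Λf :=
  stmt_3_general N M μ ν a b ha hb σ hσ Φf Φg hΦf hΦg Λf Λg hΛf hΛg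
end

section
/- Let a, b be positive real numbers. Then the mean distance to the origin over the rectangle [0,a] × [0,b], namely (1/(ab)) ∫₀^a ∫₀^b sqrt(x² + y²) dy dx, equals A(2a, 2b), where A(Δ₁, Δ₂) = [Δ₂³ · arsinh(Δ₁/Δ₂) + Δ₁³ · arsinh(Δ₂/Δ₁) + 2 Δ₁ Δ₂ sqrt(Δ₁² + Δ₂²)] / (12 Δ₁ Δ₂). -/
/-- The function A(Δ₁, Δ₂) from Theorem 2 of the paper. -/
noncomputable def paretoA (Δ₁ Δ₂ : ℝ) : ℝ :=
  (Δ₂ ^ 3 * Real.arsinh (Δ₁ / Δ₂) + Δ₁ ^ 3 * Real.arsinh (Δ₂ / Δ₁) +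
      2 * Δ₁ * Δ₂ * Real.sqrt (Δ₁ ^ 2 + Δ₂ ^ 2)) / (12 * Δ₁ * Δ₂)

/-!
Integrate in `y` first: for `x > 0` an antiderivative of `y ↦ √(x² + y²)` is
`(y √(x² + y²) + x² arsinh (y / x)) / 2`. The resulting function of `x` has the antiderivative
`(x³ arsinh (b / x) + b³ arsinh (x / b) + 2 x b √(x² + b²)) / 6`, which vanishes at `0` and is
continuous there because `|x² arsinh (b / x)| ≤ |b| |x|`. Scaling `a, b` by `2` leaves
the ratios `a / b` and `b / a` unchanged, and `A (2a, 2b)` is exactly that primitive at `a`, divided by `ab`.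
-/

open Real Set Filter Topology

lemma abs_arsinh_le_abs (t : ℝ) : |arsinh t| ≤ |t| := by
  have arsinh_le_self {s : ℝ} (hs : 0 ≤ s) : arsinh s ≤ s :=
    calc arsinh s ≤ arsinh (sinh s) := arsinh_le_arsinh.2 (self_le_sinh_iff.2 hs)
      _ = s := arsinh_sinh s
  rcases le_total 0 t with ht | ht
  · rw [abs_of_nonneg ht, abs_of_nonneg (arsinh_nonneg_iff.2 ht)]
    exact arsinh_le_self ht
  · rw [abs_of_nonpos ht, abs_of_nonpos (arsinh_nonpos_iff.2 ht), ← arsinh_neg]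
    exact arsinh_le_self (neg_nonneg.2 ht)

lemma continuous_sq_mul_arsinh_const_div (b : ℝ) :
    Continuous fun x : ℝ => x ^ 2 * arsinh (b / x) := by
  refine continuous_iff_continuousAt.2 fun x => ?_
  rcases eq_or_ne x 0 with rfl | hx
  · have hbound : ∀ y : ℝ, ‖y ^ 2 * arsinh (b / y)‖ ≤ |b| * |y| := fun y =>
      calc ‖y ^ 2 * arsinh (b / y)‖ = y ^ 2 * |arsinh (b / y)| := by
            rw [norm_mul, norm_pow, Real.norm_eq_abs, Real.norm_eq_abs, sq_abs]
        _ ≤ y ^ 2 * |b / y| := mul_le_mul_of_nonneg_left (abs_arsinh_le_abs _) (sq_nonneg y)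
        _ = |b| * |y| := by
            rcases eq_or_ne y 0 with rfl | hy
            · simp
            · rw [abs_div, ← sq_abs]
              field_simp
    have hlim : Tendsto (fun y : ℝ => |b| * |y|) (𝓝 0) (𝓝 (|b| * |0|)) :=
      (continuous_const.mul continuous_abs).tendsto 0
    rw [abs_zero, mul_zero] at hlim
    simpa [ContinuousAt] using squeeze_zero_norm hbound hlim
  · exact (continuousAt_id.pow 2).mul (continuousAt_const.div continuousAt_id hx).arsinh

lemma sqrt_one_add_div_sq {c : ℝ} (hc : 0 < c) (y : ℝ) :
    √(1 + (y / c) ^ 2) = √(c ^ 2 + y ^ 2) / c := by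
  rw [show 1 + (y / c) ^ 2 = (c ^ 2 + y ^ 2) / c ^ 2 by field_simp,
    sqrt_div' _ (by positivity), sqrt_sq hc.le]

lemma hasDerivAt_arsinh_div_const {c : ℝ} (hc : 0 < c) (y : ℝ) :
    HasDerivAt (fun y => arsinh (y / c)) (√(c ^ 2 + y ^ 2))⁻¹ y := by
  refine ((hasDerivAt_id y).div_const c).arsinh.congr_deriv ?_
  have : √(c ^ 2 + y ^ 2) ≠ 0 := by positivity
  rw [smul_eq_mul, id, sqrt_one_add_div_sq hc]
  field_simp

lemma hasDerivAt_arsinh_const_div (b : ℝ) {x : ℝ} (hx : 0 < x) :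
    HasDerivAt (fun x => arsinh (b / x)) (-(b / (x * √(x ^ 2 + b ^ 2)))) x := by
  refine ((hasDerivAt_inv hx.ne').const_mul b).arsinh.congr_deriv ?_
  have : √(x ^ 2 + b ^ 2) ≠ 0 := by positivity
  rw [smul_eq_mul, ← div_eq_mul_inv, sqrt_one_add_div_sq hx]
  field_simp

lemma hasDerivAt_sqrt_sq_add_sq {c : ℝ} (hc : c ≠ 0) (y : ℝ) :
    HasDerivAt (fun y => √(c ^ 2 + y ^ 2)) (y / √(c ^ 2 + y ^ 2)) y := by
  refine ((hasDerivAt_pow 2 y).const_add (c ^ 2)).sqrt (by positivity) |>.congr_deriv ?_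
  field_simp
  ring

lemma integral_sqrt_sq_add_sq {c : ℝ} (hc : 0 < c) (b : ℝ) :
    ∫ y in (0:ℝ)..b, √(c ^ 2 + y ^ 2)
      = (b * √(c ^ 2 + b ^ 2) + c ^ 2 * arsinh (b / c)) / 2 := by
  have hderiv : ∀ y, HasDerivAt (fun y => (y * √(c ^ 2 + y ^ 2) + c ^ 2 * arsinh (y / c)) / 2)
      (√(c ^ 2 + y ^ 2)) y := fun y => by
    refine (((hasDerivAt_id y).mul (hasDerivAt_sqrt_sq_add_sq hc.ne' y)).add
      ((hasDerivAt_arsinh_div_const hc y).const_mul (c ^ 2))).div_const 2 |>.congr_deriv ?_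
    have hs : √(c ^ 2 + y ^ 2) ^ 2 = c ^ 2 + y ^ 2 := sq_sqrt (by positivity)
    have : √(c ^ 2 + y ^ 2) ≠ 0 := by positivity
    simp only [id]
    field_simp
    linear_combination -hs
  rw [intervalIntegral.integral_eq_sub_of_hasDerivAt (fun y _ => hderiv y)
    ((by fun_prop : Continuous fun y => √(c ^ 2 + y ^ 2)).intervalIntegrable 0 b)]
  simp

noncomputable def rectDistPrimitive (b x : ℝ) : ℝ :=
  (x ^ 3 * arsinh (b / x) + b ^ 3 * arsinh (x / b) + 2 * x * b * √(x ^ 2 + b ^ 2)) / 6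

lemma rectDistPrimitive_zero (b : ℝ) : rectDistPrimitive b 0 = 0 := by
  simp [rectDistPrimitive]

lemma continuous_rectDistPrimitive (b : ℝ) : Continuous (rectDistPrimitive b) := by
  have hcube : Continuous fun x : ℝ => x ^ 3 * arsinh (b / x) :=
    (continuous_id'.mul (continuous_sq_mul_arsinh_const_div b)).congr fun x => by
      rw [Pi.mul_apply]; ring
  exact ((hcube.add (continuous_const.mul (continuous_id.div_const b).arsinh)).add
    (by fun_prop)).div_const 6

lemma hasDerivAt_rectDistPrimitive {b x : ℝ} (hb : 0 < b) (hx : 0 < x) :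
    HasDerivAt (rectDistPrimitive b)
      ((b * √(x ^ 2 + b ^ 2) + x ^ 2 * arsinh (b / x)) / 2) x := by
  have hsqrt : HasDerivAt (fun x => √(x ^ 2 + b ^ 2)) (x / √(x ^ 2 + b ^ 2)) x := by
    simpa only [add_comm (b ^ 2)] using hasDerivAt_sqrt_sq_add_sq hb.ne' x
  have harsinh : HasDerivAt (fun x => arsinh (x / b)) (√(x ^ 2 + b ^ 2))⁻¹ x := by
    simpa only [add_comm (b ^ 2)] using hasDerivAt_arsinh_div_const hb x
  refine ((((hasDerivAt_pow 3 x).mul (hasDerivAt_arsinh_const_div b hx)).add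
    (harsinh.const_mul (b ^ 3))).add
    ((((hasDerivAt_id x).const_mul 2).mul_const b).mul hsqrt)).div_const 6 |>.congr_deriv ?_
  have hs : √(x ^ 2 + b ^ 2) ^ 2 = x ^ 2 + b ^ 2 := sq_sqrt (by positivity)
  have : √(x ^ 2 + b ^ 2) ≠ 0 := by positivity
  simp only [id]
  field_simp
  linear_combination (-2 * b) * hs

lemma integral_integral_sqrt_sq_add_sq {a b : ℝ} (ha : 0 < a) (hb : 0 < b) :
    ∫ x in (0:ℝ)..a, ∫ y in (0:ℝ)..b, √(x ^ 2 + y ^ 2) = rectDistPrimitive b a := by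
  have hinner : ∀ᵐ x, x ∈ uIoc 0 a →
      ∫ y in (0:ℝ)..b, √(x ^ 2 + y ^ 2)
        = (b * √(x ^ 2 + b ^ 2) + x ^ 2 * arsinh (b / x)) / 2 :=
    MeasureTheory.ae_of_all _ fun x hx => by
      rw [uIoc_of_le ha.le] at hx
      rw [integral_sqrt_sq_add_sq hx.1]
  have hcont : Continuous fun x => (b * √(x ^ 2 + b ^ 2) + x ^ 2 * arsinh (b / x)) / 2 := by
    have := continuous_sq_mul_arsinh_const_div b
    fun_prop
  rw [intervalIntegral.integral_congr_ae hinner,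
    intervalIntegral.integral_eq_sub_of_hasDerivAt_of_le ha.le
      (continuous_rectDistPrimitive b).continuousOn
      (fun x hx => hasDerivAt_rectDistPrimitive hb hx.1) (hcont.intervalIntegrable 0 a),
    rectDistPrimitive_zero, sub_zero]

lemma paretoA_two_mul {a b : ℝ} (ha : 0 < a) (hb : 0 < b) :
    paretoA (2 * a) (2 * b) = rectDistPrimitive b a / (a * b) := by
  have hsqrt : √((2 * a) ^ 2 + (2 * b) ^ 2) = 2 * √(a ^ 2 + b ^ 2) := by
    rw [show (2 * a) ^ 2 + (2 * b) ^ 2 = 2 ^ 2 * (a ^ 2 + b ^ 2) by ring,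
      sqrt_mul (by positivity), sqrt_sq zero_le_two]
  rw [paretoA, rectDistPrimitive, hsqrt, mul_div_mul_left a b two_ne_zero,
    mul_div_mul_left b a two_ne_zero]
  field_simp
  ring

theorem stmt_8 (a b : ℝ) (ha : 0 < a) (hb : 0 < b) :
    (1 / (a * b)) * ∫ x in (0:ℝ)..a, ∫ y in (0:ℝ)..b, Real.sqrt (x ^ 2 + y ^ 2)
      = paretoA (2 * a) (2 * b) := by
  rw [integral_integral_sqrt_sq_add_sq ha hb, paretoA_two_mul ha hb, one_div_mul_eq_div]
end
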